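/- arXiv:1805.00091 — 3 statements merged into one kernel-verified Lean document; each statement's English description precedes it below -/
import Mathlib

section
/- For every finite p-group G there exist a finite p-group H and an isoclinism (φ, θ) from G to H such that Z(H) ≤ H' (i.e., H is a stem group in the isoclinism class of G). -/
open scoped Classical

namespace Paper

/-- The commutator `[x,y] = x⁻¹y⁻¹xy`. -/
def comm {G : Type*} [Group G] (x y : G) : G := x⁻¹ * y⁻¹ * x * y

/-- `K(G)`, the set of commutators in `G`. -/
def KG (G : Type*) [Group G] : Set G := {g : G | ∃ x y : G, comm x y = g}

/-- The fiber of `g` under the commutator word map. -/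
def fiber {G : Type*} [Group G] (g : G) : Set (G × G) := {q : G × G | comm q.1 q.2 = g}

/-- `Pr_g(G) = |fiber(g)| / |G|²`. -/
noncomputable def Pr (G : Type*) [Group G] (g : G) : ℚ :=
  (Nat.card (fiber g) : ℚ) / ((Nat.card G : ℚ)) ^ 2

/-- `P(G) = {Pr_g(G) : g ∈ K(G), g ≠ 1}`. -/
noncomputable def PSet (G : Type*) [Group G] : Set ℚ :=
  {q : ℚ | ∃ g ∈ KG G, g ≠ 1 ∧ Pr G g = q}

/-- The conjugacy class `g^G` of `g` in `G`. -/
def conjClass {G : Type*} [Group G] (g : G) : Set G := {h : G | ∃ x : G, x⁻¹ * g * x = h}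

/-- `G` is of conjugate type `(1, m)`: every noncentral element has conjugacy
class of size exactly `m`. -/
def IsConjugateType1 (G : Type*) [Group G] (m : ℕ) : Prop :=
  ∀ g : G, g ∉ Subgroup.center G → Nat.card (conjClass g) = m

/-- `TZ_g = {xZ(G) ∈ G/Z(G) : g ∈ [x,G]}`. -/
def TZ (G : Type*) [Group G] (g : G) : Set (G ⧸ Subgroup.center G) :=
  {xz : G ⧸ Subgroup.center G |
    ∃ x : G, (QuotientGroup.mk x : G ⧸ Subgroup.center G) = xz ∧ ∃ h : G, comm x h = g}


open scoped commutatorElement in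
lemma comm_mem_commutator {G : Type*} [Group G] (x y : G) : comm x y ∈ commutator G := by
  have h : comm x y = ⁅x⁻¹, y⁻¹⁆ := by
    simp only [comm, commutatorElement_def, inv_inv]
  rw [h, commutator_def]
  exact Subgroup.commutator_mem_commutator (Subgroup.mem_top _) (Subgroup.mem_top _)

/-! Hall's construction. Write `G = F/R` with `F` free of finite rank and put `N = F' ⊓ R`.
Two quotient maps of `F` whose kernels meet `F'` in the same subgroup induce an isoclinism: the
preimages of the two centres then agree, so both central quotients and both derived subgroups
are quotients of `F` and `F'` by the same subgroups. Since the image of `Z(F/N)` in the free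
abelian group `F/F'` is free, `Z(F/N)` contains a complement `T/N` of `Z(F/N) ⊓ F'/N`. Then
`H = F/T` satisfies `F' ⊓ T = N`, so it is isoclinic to `G`, and `Z(H) ≤ F'T/T = H'`. Finally
`H/Z(H) ≅ G/Z(G)` and `Z(H) ≤ H' ≅ G'` make `H` a finite `p`-group. -/

section

variable {G : Type*} [Group G]

theorem comm_inv (x y : G) : (comm x y)⁻¹ = comm y x := by
  simp only [comm]
  group

theorem comm_mul_center_left (x y : G) {z : G} (hz : z ∈ Subgroup.center G) :
    comm (x * z) y = comm x y := by
  have hz' := Subgroup.mem_center_iff.mp hz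
  calc comm (x * z) y = z⁻¹ * (comm x y * z) := by
        simp only [comm, mul_inv_rev, mul_assoc, hz' y]
    _ = comm x y := by rw [hz', inv_mul_cancel_left]

theorem comm_mul_center_right (x y : G) {z : G} (hz : z ∈ Subgroup.center G) :
    comm x (y * z) = comm x y := by
  rw [← comm_inv, comm_mul_center_left _ _ hz, comm_inv]

theorem comm_eq_of_mk_eq {x y x' y' : G} (hx : (x : G ⧸ Subgroup.center G) = x')
    (hy : (y : G ⧸ Subgroup.center G) = y') : comm x y = comm x' y' := by
  rw [← mul_inv_cancel_left x x', ← mul_inv_cancel_left y y',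
    comm_mul_center_left _ _ (QuotientGroup.eq.mp hx),
    comm_mul_center_right _ _ (QuotientGroup.eq.mp hy)]

theorem map_comm {H : Type*} [Group H] (f : G →* H) (x y : G) :
    f (comm x y) = comm (f x) (f y) := by
  simp only [comm, map_mul, map_inv]

end

def IsIsoclinism {G H : Type*} [Group G] [Group H]
    (φ : (G ⧸ Subgroup.center G) ≃* (H ⧸ Subgroup.center H))
    (θ : commutator G ≃* commutator H) : Prop :=
  ∀ (x y : G) (x' y' : H),
    φ (QuotientGroup.mk x) = QuotientGroup.mk x' →
    φ (QuotientGroup.mk y) = QuotientGroup.mk y' →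
    ((θ ⟨comm x y, comm_mem_commutator x y⟩ : commutator H) : H) = comm x' y'

def IsIsoclinic (G H : Type*) [Group G] [Group H] : Prop :=
  ∃ (φ : (G ⧸ Subgroup.center G) ≃* (H ⧸ Subgroup.center H))
    (θ : commutator G ≃* commutator H), IsIsoclinism φ θ

section Surjective

variable {F G H : Type*} [Group F] [Group G] [Group H]

theorem exists_mulEquiv_apply_eq_of_ker_eq {α : F →* G} {β : F →* H}
    (hα : Function.Surjective α) (hβ : Function.Surjective β) (h : α.ker = β.ker) :
    ∃ e : G ≃* H, ∀ x, e (α x) = β x := by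
  let eα := QuotientGroup.quotientKerEquivOfSurjective α hα
  refine ⟨eα.symm.trans ((QuotientGroup.quotientMulEquivOfEq h).trans
    (QuotientGroup.quotientKerEquivOfSurjective β hβ)), fun x => ?_⟩
  rw [MulEquiv.trans_apply, show eα.symm (α x) = x from eα.symm_apply_apply x]
  rfl

theorem map_commutator_of_surjective {π : F →* G} (hπ : Function.Surjective π) :
    (commutator F).map π = commutator G := by
  rw [map_commutator_eq, π.range_eq_top_of_surjective hπ, commutator_def]

theorem exists_commutator_restrict {π : F →* G} (hπ : Function.Surjective π) :
    ∃ α : commutator F →* commutator G, Function.Surjective α ∧ ∀ c, (α c : G) = π c :=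
  ⟨(MulEquiv.subgroupCongr (map_commutator_of_surjective hπ)).toMonoidHom.comp
      (π.subgroupMap (commutator F)),
    by rw [MonoidHom.coe_comp]; exact (MulEquiv.surjective _).comp (π.subgroupMap_surjective _),
    fun _ => rfl⟩

open scoped commutatorElement in
theorem mem_comap_center_iff {π : F →* G} (hπ : Function.Surjective π) {f : F} :
    f ∈ (Subgroup.center G).comap π ↔ ∀ x : F, ⁅x, f⁆ ∈ commutator F ⊓ π.ker := by
  simp only [Subgroup.mem_comap, Subgroup.mem_center_iff, hπ.forall, Subgroup.mem_inf,
    MonoidHom.mem_ker, map_commutatorElement,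
    commutatorElement_eq_one_iff_mul_comm]
  exact forall_congr' fun x => (and_iff_right
    (Subgroup.commutator_mem_commutator (Subgroup.mem_top x) (Subgroup.mem_top f))).symm

theorem comap_center_eq_of_inf_ker_eq {π : F →* G} {ρ : F →* H} (hπ : Function.Surjective π)
    (hρ : Function.Surjective ρ) (h : commutator F ⊓ π.ker = commutator F ⊓ ρ.ker) :
    (Subgroup.center G).comap π = (Subgroup.center H).comap ρ := by
  ext f
  rw [mem_comap_center_iff hπ, mem_comap_center_iff hρ, h]

theorem isIsoclinic_of_inf_ker_eq {π : F →* G} {ρ : F →* H}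
    (hπ : Function.Surjective π) (hρ : Function.Surjective ρ)
    (h : commutator F ⊓ π.ker = commutator F ⊓ ρ.ker) : IsIsoclinic G H := by
  obtain ⟨φ, hφ⟩ := exists_mulEquiv_apply_eq_of_ker_eq
    (α := (QuotientGroup.mk' (Subgroup.center G)).comp π)
    (β := (QuotientGroup.mk' (Subgroup.center H)).comp ρ)
    ((QuotientGroup.mk'_surjective (Subgroup.center G)).comp hπ)
    ((QuotientGroup.mk'_surjective (Subgroup.center H)).comp hρ)
    (by rw [← MonoidHom.comap_ker, ← MonoidHom.comap_ker, QuotientGroup.ker_mk',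
      QuotientGroup.ker_mk', comap_center_eq_of_inf_ker_eq hπ hρ h])
  obtain ⟨α, hα, hαπ⟩ := exists_commutator_restrict hπ
  obtain ⟨β, hβ, hβρ⟩ := exists_commutator_restrict hρ
  obtain ⟨θ, hθ⟩ := exists_mulEquiv_apply_eq_of_ker_eq hα hβ <| by
    ext c
    have := SetLike.ext_iff.mp h (c : F)
    simp only [Subgroup.mem_inf, c.2, true_and, MonoidHom.mem_ker] at this
    simp only [MonoidHom.mem_ker, ← OneMemClass.coe_eq_one, hαπ, hβρ, this]
  refine ⟨φ, θ, fun x y x' y' hx hy => ?_⟩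
  obtain ⟨f, rfl⟩ := hπ x
  obtain ⟨g, rfl⟩ := hπ y
  have hα' : (⟨comm (π f) (π g), comm_mem_commutator _ _⟩ : commutator G)
      = α ⟨comm f g, comm_mem_commutator f g⟩ := Subtype.ext (by rw [hαπ, map_comm])
  rw [hα', hθ, hβρ, map_comm]
  exact comm_eq_of_mk_eq ((hφ f).symm.trans hx) ((hφ g).symm.trans hy)

end Surjective

theorem exists_complement_ker_of_free {A M : Type*} [AddCommGroup A]
    [AddCommGroup M] [Module.Free ℤ M] [Module.Finite ℤ M] (g : A →+ M) :
    ∃ C : AddSubgroup A, C ⊓ g.ker = ⊥ ∧ ∀ a, ∃ c ∈ C, g c = g a := by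
  let g' := g.toIntLinearMap.rangeRestrict
  obtain ⟨s, hs⟩ :=
    Module.projective_lifting_property g' LinearMap.id g.toIntLinearMap.surjective_rangeRestrict
  have hgs : ∀ w, g' (s w) = w := fun w => LinearMap.congr_fun hs w
  refine ⟨(LinearMap.range s).toAddSubgroup, ?_, fun a => ⟨s (g' a), ⟨_, rfl⟩, ?_⟩⟩
  · rw [eq_bot_iff]
    rintro _ ⟨⟨w, rfl⟩, hw⟩
    have hw0 : w = 0 := by rw [← hgs w]; exact Subtype.ext hw
    rw [AddSubgroup.mem_bot, hw0, map_zero]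
  · exact congrArg Subtype.val (hgs (g' a))

open scoped IsMulCommutative in
theorem exists_central_complement_ker {Q B : Type*} [Group Q] [CommGroup B]
    [Module.Free ℤ (Additive B)] [Module.Finite ℤ (Additive B)] (f : Q →* B) :
    ∃ C ≤ Subgroup.center Q,
      C ⊓ f.ker = ⊥ ∧ ∀ z ∈ Subgroup.center Q, ∃ c ∈ C, f c = f z := by
  obtain ⟨C, hC, hCf⟩ :=
    exists_complement_ker_of_free (MonoidHom.toAdditive (f.comp (Subgroup.center Q).subtype))
  refine ⟨(AddSubgroup.toSubgroup' C).map (Subgroup.center Q).subtype, ?_, ?_, ?_⟩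
  · exact Subgroup.map_subtype_le _
  · rw [eq_bot_iff]
    rintro _ ⟨⟨z, hzC, rfl⟩, hz⟩
    have : Additive.ofMul z ∈
        C ⊓ (MonoidHom.toAdditive (f.comp (Subgroup.center Q).subtype)).ker :=
      ⟨hzC, congrArg Additive.ofMul hz⟩
    rw [hC] at this
    exact congrArg Subtype.val (congrArg Additive.toMul this)
  · intro z hz
    obtain ⟨c, hc, hcz⟩ := hCf (Additive.ofMul ⟨z, hz⟩)
    exact ⟨_, ⟨Additive.toMul c, hc, rfl⟩, congrArg Additive.toMul hcz⟩

open scoped commutatorElement in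
theorem exists_normal_inf_commutator_eq_inf_ker {F G : Type*} [Group F] [Group G]
    [Module.Free ℤ (Additive (Abelianization F))]
    [Module.Finite ℤ (Additive (Abelianization F))]
    {π : F →* G} (hπ : Function.Surjective π) :
    ∃ T : Subgroup F, T.Normal ∧ commutator F ⊓ T = commutator F ⊓ π.ker ∧
      (Subgroup.center G).comap π ≤ T ⊔ commutator F := by
  set N := commutator F ⊓ π.ker
  have hab : ∀ x : F, Abelianization.of x = 1 ↔ x ∈ commutator F := fun x => by
    rw [← MonoidHom.mem_ker, Abelianization.ker_of]
  let f : F ⧸ N →* Abelianization F :=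
    QuotientGroup.lift N Abelianization.of fun x hx => (hab x).mpr hx.1
  obtain ⟨C, hCZ, hCf, hZC⟩ := exists_central_complement_ker f
  have hC : C.Normal := ⟨fun c hc q => by
    rw [Subgroup.mem_center_iff.mp (hCZ hc) q, mul_inv_cancel_right]; exact hc⟩
  refine ⟨C.comap (QuotientGroup.mk' N), inferInstance, le_antisymm ?_ ?_, ?_⟩
  · rintro t ⟨htF, htC⟩
    have ht : (t : F ⧸ N) ∈ C ⊓ f.ker := ⟨htC, (hab t).mpr htF⟩
    rw [hCf] at ht
    exact (QuotientGroup.eq_one_iff t).mp ht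
  · exact le_inf inf_le_left fun n hn => by
      simp [Subgroup.mem_comap, (QuotientGroup.eq_one_iff n).mpr hn, C.one_mem]
  · intro s hs
    have hsZ : (s : F ⧸ N) ∈ Subgroup.center (F ⧸ N) := by
      refine Subgroup.mem_center_iff.mpr fun q => ?_
      obtain ⟨x, rfl⟩ := QuotientGroup.mk_surjective q
      rw [← commutatorElement_eq_one_iff_mul_comm]
      exact (map_commutatorElement (QuotientGroup.mk' N) x s).symm.trans
        ((QuotientGroup.eq_one_iff _).mpr ((mem_comap_center_iff hπ).mp hs x))
    obtain ⟨c, hc, hcs⟩ := hZC _ hsZ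
    obtain ⟨t, rfl⟩ := QuotientGroup.mk_surjective c
    have hts : t⁻¹ * s ∈ commutator F := by
      rw [← hab, map_mul, map_inv, inv_mul_eq_one]
      exact hcs
    simpa using Subgroup.mul_mem_sup (show t ∈ C.comap (QuotientGroup.mk' N) from hc) hts

theorem center_le_commutator_of_comap_center_le {F H : Type*} [Group F] [Group H] {ρ : F →* H}
    (hρ : Function.Surjective ρ) (h : (Subgroup.center H).comap ρ ≤ ρ.ker ⊔ commutator F) :
    Subgroup.center H ≤ commutator H := by
  intro z hz
  obtain ⟨f, rfl⟩ := hρ z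
  have := Subgroup.mem_map_of_mem ρ (h hz)
  rwa [Subgroup.map_sup, Subgroup.map_ker_self, bot_sup_eq,
    map_commutator_of_surjective hρ] at this

theorem exists_isIsoclinic_quotient_center_le_commutator {F G : Type*} [Group F] [Group G]
    [Module.Free ℤ (Additive (Abelianization F))]
    [Module.Finite ℤ (Additive (Abelianization F))]
    {π : F →* G} (hπ : Function.Surjective π) :
    ∃ T : Subgroup F, ∃ _ : T.Normal,
      IsIsoclinic G (F ⧸ T) ∧ Subgroup.center (F ⧸ T) ≤ commutator (F ⧸ T) := by
  obtain ⟨T, hT, hTker, hTZ⟩ := exists_normal_inf_commutator_eq_inf_ker hπ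
  have hρ := QuotientGroup.mk'_surjective T
  have hker : commutator F ⊓ π.ker = commutator F ⊓ (QuotientGroup.mk' T).ker := by
    rw [QuotientGroup.ker_mk', hTker]
  refine ⟨T, hT, isIsoclinic_of_inf_ker_eq hπ hρ hker,
    center_le_commutator_of_comap_center_le hρ ?_⟩
  rw [← comap_center_eq_of_inf_ker_eq hπ hρ hker, QuotientGroup.ker_mk']
  exact hTZ

theorem isPGroup_of_quotient {G : Type*} [Group G] {p : ℕ} {N : Subgroup G} [N.Normal]
    (hN : IsPGroup p N) (hQ : IsPGroup p (G ⧸ N)) : IsPGroup p G := fun g => by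
  obtain ⟨j, hj⟩ := hQ g
  obtain ⟨k, hk⟩ := hN ⟨g ^ p ^ j, (QuotientGroup.eq_one_iff _).mp hj⟩
  exact ⟨j + k, by rw [pow_add, pow_mul]; exact congrArg Subtype.val hk⟩

theorem IsIsoclinic.finite_isPGroup {G H : Type*} [Group G] [Group H] [Finite G] {p : ℕ}
    (hG : IsPGroup p G) (hGH : IsIsoclinic G H) (hH : Subgroup.center H ≤ commutator H) :
    Finite H ∧ IsPGroup p H := by
  obtain ⟨φ, θ, -⟩ := hGH
  have : Finite (H ⧸ Subgroup.center H) := Finite.of_equiv _ φ.toEquiv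
  have : Finite (commutator H) := Finite.of_equiv _ θ.toEquiv
  have : Finite (Subgroup.center H) := Finite.of_injective _ (Subgroup.inclusion_injective hH)
  exact ⟨Finite.of_subgroup_quotient (Subgroup.center H),
    isPGroup_of_quotient (((hG.to_subgroup _).of_equiv θ).to_le hH)
      ((hG.to_quotient _).of_equiv φ)⟩

instance (ι : Type*) : Module.Free ℤ (Additive (Abelianization (FreeGroup ι))) :=
  inferInstanceAs (Module.Free ℤ (FreeAbelianGroup ι))

instance (ι : Type*) [Finite ι] : Module.Finite ℤ (Additive (Abelianization (FreeGroup ι))) :=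
  inferInstanceAs (Module.Finite ℤ (FreeAbelianGroup ι))

theorem stmt2_general (p : ℕ) (G : Type*) [Group G] [Finite G]
    (hG : IsPGroup p G) :
    ∃ (H : Type) (_ : Group H) (_ : Finite H),
      IsPGroup p H ∧
      (∃ (φ : (G ⧸ Subgroup.center G) ≃* (H ⧸ Subgroup.center H))
         (θ : (commutator G) ≃* (commutator H)),
        (∀ (x y : G) (x' y' : H),
          φ (QuotientGroup.mk x) = QuotientGroup.mk x' →
          φ (QuotientGroup.mk y) = QuotientGroup.mk y' →
          ((θ ⟨comm x y, comm_mem_commutator x y⟩ : commutator H) : H) = comm x' y')) ∧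
      Subgroup.center H ≤ commutator H := by
  obtain ⟨π, hπ⟩ : ∃ π : FreeGroup (Fin (Nat.card G)) →* G, Function.Surjective π :=
    ⟨FreeGroup.lift (Finite.equivFin G).symm,
      FreeGroup.lift_surjective_of_surjective (Finite.equivFin G).symm.surjective⟩
  obtain ⟨T, _, hGH, hZ⟩ := exists_isIsoclinic_quotient_center_le_commutator hπ
  obtain ⟨hfin, hpH⟩ := hGH.finite_isPGroup hG hZ
  exact ⟨_, inferInstance, hfin, hpH, hGH, hZ⟩

/-- every finite `p`-group is isoclinic to a stem group, i.e. a
finite `p`-group `H` with `Z(H) ≤ H'`. -/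
theorem stmt2 (p : ℕ) (hp : p.Prime) (G : Type*) [Group G] [Finite G]
    (hG : IsPGroup p G) :
    ∃ (H : Type) (_ : Group H) (_ : Finite H),
      IsPGroup p H ∧
      (∃ (φ : (G ⧸ Subgroup.center G) ≃* (H ⧸ Subgroup.center H))
         (θ : (commutator G) ≃* (commutator H)),
        (∀ (x y : G) (x' y' : H),
          φ (QuotientGroup.mk x) = QuotientGroup.mk x' →
          φ (QuotientGroup.mk y) = QuotientGroup.mk y' →
          ((θ ⟨comm x y, comm_mem_commutator x y⟩ : commutator H) : H) = comm x' y')) ∧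
      Subgroup.center H ≤ commutator H :=
  stmt2_general p G hG

end Paper
end

section
/- For every finite group G and every g ∈ G, Pr_g(G) = (1/|G|) · Σ_{x ∈ T_g} 1/|x^G|, where x^G denotes the conjugacy class of x in G and the sum is over the set T_g. -/
open scoped Classical

namespace Paper

section Aux
variable {G : Type*} [Group G]

lemma conjClass_eq_orbit (x : G) : conjClass x = MulAction.orbit (ConjAct G) x := by
  ext h
  constructor
  · rintro ⟨c, rfl⟩
    exact ⟨ConjAct.toConjAct c⁻¹, by simp [ConjAct.smul_def, mul_assoc]⟩
  · rintro ⟨c, rfl⟩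
    exact ⟨(ConjAct.ofConjAct c)⁻¹, by simp [ConjAct.smul_def, mul_assoc]⟩

noncomputable def centralizer_equiv_stabilizer (x : G) :
    (Subgroup.centralizer {x} : Subgroup G) ≃ MulAction.stabilizer (ConjAct G) x where
  toFun z := ⟨ConjAct.toConjAct z.1, by
    have hz := z.2
    rw [Subgroup.mem_centralizer_iff] at hz
    have hx : x * z.1 = z.1 * x := hz x rfl
    simp [MulAction.mem_stabilizer_iff, ConjAct.smul_def, mul_inv_eq_iff_eq_mul, hx]⟩
  invFun s := ⟨ConjAct.ofConjAct s.1, by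
    have hs := s.2
    rw [MulAction.mem_stabilizer_iff, ConjAct.smul_def, mul_inv_eq_iff_eq_mul] at hs
    rw [Subgroup.mem_centralizer_iff]
    rintro a rfl
    exact hs.symm⟩
  left_inv z := by simp
  right_inv s := by simp

lemma orbit_stab (x : G) [Fintype G] :
    Nat.card (conjClass x) * Nat.card (Subgroup.centralizer ({x} : Set G)) = Nat.card G := by
  have h1 := MulAction.card_orbit_mul_card_stabilizer_eq_card_group (ConjAct G) x
  rw [conjClass_eq_orbit, Nat.card_eq_fintype_card, Nat.card_eq_fintype_card,
    Nat.card_eq_fintype_card, Fintype.card_congr (centralizer_equiv_stabilizer x), h1,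
    ← Fintype.card_congr (ConjAct.toConjAct (G := G)).toEquiv]

noncomputable def fiber_slice (x g : G) {h : G} (hh : comm x h = g) :
    {y : G // comm x y = g} ≃ (Subgroup.centralizer ({x} : Set G)) := by
  refine Equiv.subtypeEquiv (Equiv.mulRight h⁻¹) ?_
  intro y
  subst hh
  simp only [Equiv.coe_mulRight, Subgroup.mem_centralizer_iff, Set.mem_singleton_iff,
    forall_eq, SetLike.mem_coe]
  constructor
  · intro hy
    have h2 : y⁻¹ * (x * y) = h⁻¹ * (x * h) := by
      have := hy
      simp only [comm, mul_assoc] at this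
      exact mul_left_cancel this
    have h3 : x * y = y * (h⁻¹ * (x * h)) := by
      rw [← h2]; group
    calc x * (y * h⁻¹) = (x * y) * h⁻¹ := by group
      _ = (y * (h⁻¹ * (x * h))) * h⁻¹ := by rw [h3]
      _ = (y * h⁻¹) * x := by group
  · intro hy
    have h3 : x * y = (y * h⁻¹) * x * h := by
      rw [← hy]; group
    show comm x y = comm x h
    simp only [comm]
    calc x⁻¹ * y⁻¹ * x * y = x⁻¹ * y⁻¹ * (x * y) := by group
      _ = x⁻¹ * y⁻¹ * ((y * h⁻¹) * x * h) := by rw [h3]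
      _ = x⁻¹ * h⁻¹ * x * h := by group

end Aux

/-- `Pr_g(G) = (1/|G|) · Σ_{x ∈ T_g} 1/|x^G|`, where
`T_g = {x ∈ G : g ∈ [x,G]}`. -/
theorem stmt4 (G : Type*) [Group G] [Fintype G] (g : G) :
    Pr G g = (1 / (Nat.card G : ℚ)) *
      ∑ x ∈ Finset.univ.filter (fun x : G => ∃ h : G, comm x h = g),
        1 / (Nat.card (conjClass x) : ℚ) := by
  classical
  have hn : (Nat.card G : ℚ) ≠ 0 := by
    simp [Nat.card_eq_fintype_card, Fintype.card_ne_zero]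
  -- fiber count
  have hcard : (Nat.card (fiber g) : ℚ)
      = ∑ x ∈ Finset.univ.filter (fun x : G => ∃ h : G, comm x h = g), (Nat.card (Subgroup.centralizer ({x} : Set G)) : ℚ) := by
    have e : fiber g ≃ Σ x : G, {y : G // comm x y = g} :=
      { toFun := fun q => ⟨q.1.1, q.1.2, q.2⟩
        invFun := fun s => ⟨(s.1, s.2.1), s.2.2⟩
        left_inv := fun q => rfl
        right_inv := fun s => rfl }
    rw [Nat.card_congr e, Nat.card_eq_fintype_card, Fintype.card_sigma]
    push_cast
    rw [← Finset.sum_filter_add_sum_filter_not Finset.univ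
      (fun x : G => ∃ h : G, comm x h = g)]
    have h2 : ∀ x ∈ Finset.univ.filter (fun x : G => ¬ ∃ h : G, comm x h = g),
        (Fintype.card {y : G // comm x y = g} : ℚ) = 0 := by
      intro x hx
      simp only [Finset.mem_filter] at hx
      have : IsEmpty {y : G // comm x y = g} := ⟨fun y => hx.2 ⟨y.1, y.2⟩⟩
      simp [Fintype.card_eq_zero]
    rw [Finset.sum_eq_zero h2, add_zero]
    refine Finset.sum_congr rfl fun x hx => ?_
    simp only [Finset.mem_filter] at hx
    obtain ⟨h, hh⟩ := hx.2
    rw [Fintype.card_congr (fiber_slice x g hh), ← Nat.card_eq_fintype_card]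
  have hterm : ∀ x ∈ Finset.univ.filter (fun x : G => ∃ h : G, comm x h = g), (1 : ℚ) / (Nat.card (conjClass x) : ℚ)
      = (Nat.card (Subgroup.centralizer ({x} : Set G)) : ℚ) / (Nat.card G : ℚ) := by
    intro x _
    have hos := orbit_stab (G := G) x
    have hk : (Nat.card (conjClass x) : ℚ) ≠ 0 := by
      have : x ∈ conjClass x := ⟨1, by simp⟩
      have hfin : (conjClass x).Finite := Set.toFinite _
      have : Nat.card (conjClass x) ≠ 0 := by
        rw [Nat.card_ne_zero]
        exact ⟨⟨x, this⟩, hfin⟩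
      exact_mod_cast this
    have : (Nat.card (conjClass x) : ℚ) * (Nat.card (Subgroup.centralizer ({x} : Set G)) : ℚ)
        = (Nat.card G : ℚ) := by exact_mod_cast hos
    rw [div_eq_div_iff hk hn, one_mul, ← this, mul_comm]
  rw [Finset.sum_congr rfl hterm]
  rw [Pr, hcard, Finset.sum_div, Finset.mul_sum]
  refine Finset.sum_congr rfl fun x _ => ?_
  field_simp

end Paper
end

section
/- For every finite group G and every g ∈ G with g ≠ 1, Pr_1(G) − Pr_g(G) ≥ 1/[G : Z(G)]. -/
open scoped Classical

namespace Paper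

lemma card_fiber_eq_sum (G : Type*) [Group G] [Fintype G] (g : G) :
    Nat.card (fiber g) = ∑ x : G, Nat.card {y : G // comm x y = g} := by
  have e : ↥(fiber g) ≃ Σ x : G, {y : G // comm x y = g} :=
    { toFun := fun q => ⟨q.1.1, q.1.2, q.2⟩
      invFun := fun s => ⟨(s.1, s.2.1), s.2.2⟩
      left_inv := fun q => rfl
      right_inv := fun s => rfl }
  rw [Nat.card_congr e]
  simp [Nat.card_eq_fintype_card, Fintype.card_sigma]

lemma card_sol_le (G : Type*) [Group G] [Finite G] (g : G) (x : G) :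
    Nat.card {y : G // comm x y = g} ≤ Nat.card {y : G // comm x y = 1} := by
  rcases isEmpty_or_nonempty {y : G // comm x y = g} with h | ⟨⟨y0, hy0⟩⟩
  · simp [Nat.card_of_isEmpty]
  · apply Nat.card_le_card_of_injective
      (f := fun (y : {y : G // comm x y = g}) =>
        (⟨y.1 * y0⁻¹, by
          have hy := y.2
          unfold comm at hy hy0 ⊢
          have h1 : (y.1)⁻¹ * x * y.1 = x * g := by
            have e : x * (x⁻¹ * (y.1)⁻¹ * x * y.1) = (y.1)⁻¹ * x * y.1 := by group
            rw [hy] at e; exact e.symm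
          have h0 : y0⁻¹ * x * y0 = x * g := by
            have e : x * (x⁻¹ * y0⁻¹ * x * y0) = y0⁻¹ * x * y0 := by group
            rw [hy0] at e; exact e.symm
          have hc : x * (y.1 * y0⁻¹) = (y.1 * y0⁻¹) * x := by
            have hxy : x * y.1 = y.1 * (x * g) := by rw [← h1]; group
            calc x * (y.1 * y0⁻¹) = (y.1 * (x * g)) * y0⁻¹ := by rw [← mul_assoc, hxy]
              _ = y.1 * ((y0⁻¹ * x * y0) * y0⁻¹) := by rw [← h0]; group
              _ = (y.1 * y0⁻¹) * x := by group
          rw [mul_assoc, hc]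
          group⟩ : {y : G // comm x y = 1}))
    intro a b hab
    have := congrArg (fun t => (t : G) * y0) (Subtype.ext_iff.mp hab)
    simpa using Subtype.ext (by simpa using this)

/-- `Pr_1(G) − Pr_g(G) ≥ 1/[G : Z(G)]` for any `g ≠ 1`. -/
theorem stmt5 (G : Type*) [Group G] [Finite G] (g : G) (hg : g ≠ 1) :
    (1 : ℚ) / ((Subgroup.center G).index : ℚ) ≤ Pr G 1 - Pr G g := by
  have : Fintype G := Fintype.ofFinite G
  set n : ℕ := Nat.card G with hn
  set z : ℕ := Nat.card (Subgroup.center G) with hz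
  set i : ℕ := (Subgroup.center G).index with hi
  have hzi : z * i = n := Subgroup.card_mul_index _
  have hnpos : 0 < n := Nat.card_pos
  have hzpos : 0 < z := Nat.card_pos
  have hipos : 0 < i := by
    rcases Nat.eq_zero_or_pos i with h | h
    · rw [h, Nat.mul_zero] at hzi; omega
    · exact h
  have key : (Nat.card (fiber g) : ℚ) + z * n ≤ Nat.card (fiber (1 : G)) := by
    rw [card_fiber_eq_sum G g, card_fiber_eq_sum G (1 : G)]
    have hcomm1 : ∀ x : G, x ∈ Subgroup.center G → ∀ y : G, comm x y = 1 := by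
      intro x hxc y
      rw [Subgroup.mem_center_iff] at hxc
      unfold comm
      rw [mul_assoc, ← hxc y]; group
    have hcent : ∀ x ∈ Finset.univ.filter (fun x => x ∈ Subgroup.center G),
        Nat.card {y : G // comm x y = g} + n ≤ Nat.card {y : G // comm x y = 1} := by
      intro x hx
      simp only [Finset.mem_filter] at hx
      have h0 : Nat.card {y : G // comm x y = g} = 0 := by
        have : IsEmpty {y : G // comm x y = g} := by
          constructor; rintro ⟨y, hy⟩
          exact hg (by rw [← hy, hcomm1 x hx.2 y])
        simp
      have h1 : Nat.card {y : G // comm x y = 1} = n := by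
        rw [Nat.card_congr (Equiv.subtypeUnivEquiv (hcomm1 x hx.2))]
      omega
    have hfilt : (Finset.univ.filter (fun x => x ∈ Subgroup.center G)).card = z := by
      rw [hz, Nat.card_eq_fintype_card, Fintype.card_subtype]
    have hnat : (∑ x : G, Nat.card {y : G // comm x y = g}) + z * n
        ≤ ∑ x : G, Nat.card {y : G // comm x y = 1} := by
      have hsplit : ∀ (h : G → ℕ), ∑ x : G, h x
          = (∑ x ∈ Finset.univ.filter (fun x => x ∈ Subgroup.center G), h x)
            + ∑ x ∈ Finset.univ.filter (fun x => x ∉ Subgroup.center G), h x := by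
        intro h
        rw [← Finset.sum_filter_add_sum_filter_not Finset.univ (fun x => x ∈ Subgroup.center G) h]
      rw [hsplit (fun x => Nat.card {y : G // comm x y = g}),
          hsplit (fun x => Nat.card {y : G // comm x y = 1})]
      have h2 : ∑ x ∈ Finset.univ.filter (fun x => x ∉ Subgroup.center G),
            Nat.card {y : G // comm x y = g}
          ≤ ∑ x ∈ Finset.univ.filter (fun x => x ∉ Subgroup.center G),
            Nat.card {y : G // comm x y = 1} :=
        Finset.sum_le_sum fun x _ => card_sol_le G g x
      have h3 : (∑ x ∈ Finset.univ.filter (fun x => x ∈ Subgroup.center G),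
            Nat.card {y : G // comm x y = g}) + z * n
          ≤ ∑ x ∈ Finset.univ.filter (fun x => x ∈ Subgroup.center G),
            Nat.card {y : G // comm x y = 1} := by
        calc (∑ x ∈ Finset.univ.filter (fun x => x ∈ Subgroup.center G),
              Nat.card {y : G // comm x y = g}) + z * n
            = ∑ x ∈ Finset.univ.filter (fun x => x ∈ Subgroup.center G),
              (Nat.card {y : G // comm x y = g} + n) := by
              rw [Finset.sum_add_distrib, Finset.sum_const, hfilt, smul_eq_mul]
          _ ≤ _ := Finset.sum_le_sum hcent
      omega
    exact_mod_cast hnat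
  unfold Pr
  rw [div_sub_div_same, div_le_div_iff₀ (by positivity) (by positivity)]
  have hcast : (z : ℚ) * i = n := by exact_mod_cast hzi
  have h4 : (z : ℚ) * n ≤ (Nat.card (fiber (1 : G)) : ℚ) - Nat.card (fiber g) := by
    linarith
  have hn2 : ((Nat.card G : ℚ)) ^ 2 = ((z : ℚ) * n) * i := by
    rw [show ((Nat.card G : ℚ)) = (n : ℚ) from rfl, ← hcast]; ring
  have h5 := mul_le_mul_of_nonneg_right h4 (show (0 : ℚ) ≤ i by positivity)
  linarith

end Paper
end
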